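/- Let k ∈ ℝ, let w_A, w_B : ℝ → ℂ be C^∞ functions with w_A(x) + w_B(x) = x + k, let s_A, s_B be antiderivatives with s_A(x) + s_B(x) = x²/2 + kx, and let φ_n = (1/√(n!)) Bⁿ (N_φ e^{−s_A}) and Ψ_n = (1/√(n!)) (A†)ⁿ (N_Ψ e^{−conj(s_B)}) be the pseudo-bosonic eigenfunctions, where (Bf)(x) = −f'(x) + w_B(x) f(x) and (A†f)(x) = −f'(x) + conj(w_A(x)) f(x); let also (B†f)(x) = f'(x) + conj(w_B(x)) f(x). Then for every C^∞ compactly supported function v : ℝ → ℂ and every z ∈ ℂ, the series below converge absolutely and satisfy the weak eigenvalue equations: Σ_{n≥0} (zⁿ/√(n!))·⟨A†v, φ_n⟩ = z·Σ_{n≥0} (zⁿ/√(n!))·⟨v, φ_n⟩ and Σ_{n≥0} (zⁿ/√(n!))·⟨B†... , i.e. Σ_{n≥0} (zⁿ/√(n!))·⟨Bv, Ψ_n⟩ = z·Σ_{n≥0} (zⁿ/√(n!))·⟨v, Ψ_n⟩, where ⟨u, w⟩ = ∫_ℝ conj(u(x)) w(x) dx. (These state that the weak bi-coherent states φ(z)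 and Ψ(z) satisfy ⟨v, Aφ(z)⟩ = z⟨v, φ(z)⟩ and ⟨v, B†Ψ(z)⟩ = z⟨v, Ψ(z)⟩ in the sense of distributions, on all of ℂ since here α_n = √n and ᾱ = ∞.) -/

import Mathlib

open MeasureTheory

noncomputable section

/-- The pseudo-bosonic lowering operator `A = d/dx + w_A`. -/
def opA (wA : ℝ → ℂ) (f : ℝ → ℂ) : ℝ → ℂ :=
  fun x => deriv f x + wA x * f x

/-- The pseudo-bosonic raising operator `B = -d/dx + w_B`. -/
def opB (wB : ℝ → ℂ) (f : ℝ → ℂ) : ℝ → ℂ :=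
  fun x => -deriv f x + wB x * f x

/-- The pseudo-bosonic raising operator `A† = -d/dx + conj w_A`. -/
def opAdag (wA : ℝ → ℂ) (f : ℝ → ℂ) : ℝ → ℂ :=
  fun x => -deriv f x + (starRingEnd ℂ) (wA x) * f x

/-- The pseudo-bosonic lowering operator `B† = d/dx + conj w_B`. -/
def opBdag (wB : ℝ → ℂ) (f : ℝ → ℂ) : ℝ → ℂ :=
  fun x => deriv f x + (starRingEnd ℂ) (wB x) * f x

/-- `φ_n = (1/√n!) Bⁿ φ₀` with `φ₀ = N_φ e^{-s_A}`. -/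
def pbPhi (wB sA : ℝ → ℂ) (Nφ : ℂ) (n : ℕ) : ℝ → ℂ :=
  fun x => (1 / (Real.sqrt n.factorial : ℂ)) *
    ((opB wB)^[n] (fun t => Nφ * Complex.exp (-sA t)) x)

/-- `Ψ_n = (1/√n!) (A†)ⁿ Ψ₀` with `Ψ₀ = N_Ψ e^{-conj s_B}`. -/
def pbPsi (wA sB : ℝ → ℂ) (NΨ : ℂ) (n : ℕ) : ℝ → ℂ :=
  fun x => (1 / (Real.sqrt n.factorial : ℂ)) *
    ((opAdag wA)^[n] (fun t => NΨ * Complex.exp (-(starRingEnd ℂ) (sB t))) x)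

namespace PB
open MeasureTheory Polynomial

theorem derivative_hermite_succ (n : ℕ) :
    derivative (hermite (n+1)) = C ((n : ℤ)+1) * hermite n := by
  induction n with
  | zero => simp [hermite_one, hermite_zero]
  | succ n ih =>
      rw [hermite_succ (n+1), derivative_sub, derivative_mul, derivative_X, one_mul, ih,
        derivative_mul, derivative_C, zero_mul, zero_add, hermite_succ n]
      simp only [Nat.cast_add, Nat.cast_one, C_add, C_1]
      ring

def herm (n : ℕ) : Polynomial ℂ := (hermite n).map (Int.castRingHom ℂ)

theorem herm_zero : herm 0 = 1 := by simp [herm, hermite_zero]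

theorem herm_succ (n : ℕ) : herm (n+1) = X * herm n - derivative (herm n) := by
  simp [herm, hermite_succ n, Polynomial.derivative_map]

theorem derivative_herm_succ (n : ℕ) :
    derivative (herm (n+1)) = C ((n : ℂ)+1) * herm n := by
  rw [herm, Polynomial.derivative_map, derivative_hermite_succ, Polynomial.map_mul,
    Polynomial.map_C]
  simp [herm]

theorem herm_one : herm 1 = X := by
  simp [herm, hermite_one]

theorem key_ineq (T : ℝ) (hT : 2 ≤ T) (n : ℕ) :
    T * (T^(n+1) * Real.sqrt (n+1).factorial) + ((n:ℝ)+1) * (T^n * Real.sqrt n.factorial)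
      ≤ T^(n+2) * Real.sqrt (n+2).factorial := by
  have hc : (0:ℝ) ≤ Real.sqrt n.factorial := Real.sqrt_nonneg _
  have ha1 : Real.sqrt ((n:ℝ)+1) ≥ 1 := by
    have h := Real.sqrt_le_sqrt (show (1:ℝ) ≤ (n:ℝ)+1 by linarith [Nat.cast_nonneg (α := ℝ) n])
    simpa using h
  have hb1 : Real.sqrt ((n:ℝ)+2) ≥ 1 := by
    have h := Real.sqrt_le_sqrt (show (1:ℝ) ≤ (n:ℝ)+2 by linarith [Nat.cast_nonneg (α := ℝ) n])
    simpa using h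
  have ha2 : Real.sqrt ((n:ℝ)+1) ^ 2 = (n:ℝ)+1 := Real.sq_sqrt (by positivity)
  have hb2 : Real.sqrt ((n:ℝ)+2) ^ 2 = (n:ℝ)+2 := Real.sq_sqrt (by positivity)
  have hab : Real.sqrt ((n:ℝ)+1) ≤ Real.sqrt ((n:ℝ)+2) := Real.sqrt_le_sqrt (by linarith)
  set a := Real.sqrt ((n:ℝ)+1) with hadef
  set b := Real.sqrt ((n:ℝ)+2) with hbdef
  have hfac1 : Real.sqrt (n+1).factorial = a * Real.sqrt n.factorial := by
    rw [Nat.factorial_succ]; push_cast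
    rw [Real.sqrt_mul (by positivity)]
  have hfac2 : Real.sqrt (n+2).factorial = b * (a * Real.sqrt n.factorial) := by
    rw [show (n+2).factorial = (n+2) * (n+1).factorial from Nat.factorial_succ (n+1)]
    push_cast
    rw [Real.sqrt_mul (by positivity), hfac1]
  rw [hfac1, hfac2]
  have hT0 : (0:ℝ) < T := by linarith
  have hTn : (0:ℝ) ≤ T^n := by positivity
  have h3b : 3*b ≥ 4 := by nlinarith [hb2, hb1, Nat.cast_nonneg (α := ℝ) n]
  have hT4 : 4 ≤ T^2 := by nlinarith
  have h45 : 0 ≤ (T^2-4)*(b-1) := mul_nonneg (by linarith) (by linarith)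
  have h6 : T^2*(b-1) ≥ a := by nlinarith [h45, h3b, hab]
  have h7 : a * a ≤ a * (T^2*(b-1)) := mul_le_mul_of_nonneg_left h6 (by linarith)
  have key : T^2 * a + ((n:ℝ)+1) ≤ T^2 * (b * a) := by nlinarith [h7, ha2]
  calc T * (T^(n+1) * (a * Real.sqrt n.factorial)) + ((n:ℝ)+1) * (T^n * Real.sqrt n.factorial)
      = (T^2 * a + ((n:ℝ)+1)) * (T^n * Real.sqrt n.factorial) := by ring
    _ ≤ (T^2 * (b * a)) * (T^n * Real.sqrt n.factorial) := by
        apply mul_le_mul_of_nonneg_right key (by positivity)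
    _ = T^(n+2) * (b * (a * Real.sqrt n.factorial)) := by ring

theorem summable_pow_div_sqrt_factorial (r : ℝ) (hr : 0 ≤ r) :
    Summable (fun n : ℕ => r^n / Real.sqrt n.factorial) := by
  apply summable_of_ratio_norm_eventually_le (r := 1/2) (by norm_num)
  filter_upwards [Filter.eventually_ge_atTop ⌈(2*r)^2⌉₊] with n hn
  have h1 : (2*r) ≤ Real.sqrt ((n:ℝ)+1) := by
    rw [show 2*r = Real.sqrt ((2*r)^2) from (Real.sqrt_sq (by positivity)).symm]
    apply Real.sqrt_le_sqrt
    calc (2*r)^2 ≤ (⌈(2*r)^2⌉₊ : ℝ) := Nat.le_ceil _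
      _ ≤ (n:ℝ) := Nat.cast_le.mpr hn
      _ ≤ (n:ℝ)+1 := by linarith
  have hs0 : (0:ℝ) < Real.sqrt ((n:ℝ)+1) := by positivity
  have hf0 : (0:ℝ) < Real.sqrt n.factorial := by
    apply Real.sqrt_pos.mpr; exact_mod_cast Nat.factorial_pos n
  have heq : r^(n+1) / Real.sqrt (n+1).factorial
      = (r / Real.sqrt ((n:ℝ)+1)) * (r^n / Real.sqrt n.factorial) := by
    rw [Nat.factorial_succ, pow_succ]
    push_cast
    rw [Real.sqrt_mul (by positivity)]
    field_simp
  rw [heq, norm_mul]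
  apply mul_le_mul_of_nonneg_right _ (norm_nonneg _)
  rw [Real.norm_eq_abs, abs_of_nonneg (by positivity)]
  rw [div_le_iff₀ hs0]
  linarith


theorem herm_bound {T : ℝ} (hT : 2 ≤ T) (n : ℕ) (t : ℂ) (ht : ‖t‖ ≤ T) :
    ‖(herm n).eval t‖ ≤ T^n * Real.sqrt n.factorial := by
  have hT0 : (0:ℝ) ≤ T := by linarith
  suffices H : ∀ m : ℕ, ‖(herm m).eval t‖ ≤ T^m * Real.sqrt m.factorial ∧
      ‖(herm (m+1)).eval t‖ ≤ T^(m+1) * Real.sqrt (m+1).factorial from (H n).1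
  intro m
  induction m with
  | zero =>
      constructor
      · simp [herm_zero]
      · simpa [herm_one, Nat.factorial] using ht
  | succ m ih =>
      refine ⟨ih.2, ?_⟩
      have hrec : (herm (m+2)).eval t
          = t * (herm (m+1)).eval t - (((m:ℂ)+1) * (herm m).eval t) := by
        rw [herm_succ (m+1), derivative_herm_succ m]
        simp
      rw [hrec]
      calc ‖t * (herm (m+1)).eval t - ((m:ℂ)+1) * (herm m).eval t‖
          ≤ ‖t * (herm (m+1)).eval t‖
            + ‖((m:ℂ)+1) * (herm m).eval t‖ := by
            exact norm_sub_le _ _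
        _ = ‖t‖ * ‖(herm (m+1)).eval t‖
            + ((m:ℝ)+1) * ‖(herm m).eval t‖ := by
            rw [norm_mul, norm_mul]
            congr 2
            simpa using Complex.norm_natCast (m+1)
        _ ≤ T * (T^(m+1) * Real.sqrt (m+1).factorial)
            + ((m:ℝ)+1) * (T^m * Real.sqrt m.factorial) := by
            gcongr
            · exact ih.2
            · exact ih.1
        _ ≤ T^(m+2) * Real.sqrt (m+2).factorial := key_ineq T hT m



def Gf (k : ℝ) (sB : ℝ → ℂ) (Nφ : ℂ) : ℝ → ℂ :=
  fun x => Nφ * Complex.exp (sB x - ((x:ℂ)^2/2 + k*x))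

def Ff (k : ℝ) (sB : ℝ → ℂ) (Nφ : ℂ) (n : ℕ) : ℝ → ℂ :=
  fun x => Gf k sB Nφ x * (herm n).eval ((x:ℂ)+k)

variable {k : ℝ} {wA wB sA sB : ℝ → ℂ} {Nφ : ℂ}

theorem hasDerivAt_quad (k : ℝ) (x : ℝ) :
    HasDerivAt (fun y : ℝ => ((y:ℂ)^2/2 + k*y)) ((x:ℂ)+k) x := by
  have h : HasDerivAt (fun z : ℂ => z^2/2 + (k:ℂ)*z) ((x:ℂ)+k) (x:ℂ) := by
    have h1 := ((hasDerivAt_id ((x:ℂ))).pow 2).div_const 2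
    have h2 := (hasDerivAt_id ((x:ℂ))).const_mul (k:ℂ)
    exact (h1.add h2).congr_deriv (by simp)
  exact h.comp_ofReal

theorem hasDerivAt_G (hsB : ∀ x, HasDerivAt sB (wB x) x) (x : ℝ) :
    HasDerivAt (Gf k sB Nφ) ((wB x - ((x:ℂ)+k)) * Gf k sB Nφ x) x := by
  have h := (((hsB x).sub (hasDerivAt_quad k x)).cexp).const_mul Nφ
  exact h.congr_deriv (by simp only [Gf, Pi.sub_apply]; ring)

theorem hasDerivAt_hermpart (k : ℝ) (p : Polynomial ℂ) (x : ℝ) :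
    HasDerivAt (fun y : ℝ => p.eval ((y:ℂ)+k)) ((derivative p).eval ((x:ℂ)+k)) x := by
  have h2 := ((p.comp (X + C (k:ℂ))).hasDerivAt ((x:ℂ))).comp_ofReal
  simp only [Polynomial.eval_comp, Polynomial.derivative_comp, Polynomial.derivative_add,
    Polynomial.derivative_X, Polynomial.derivative_C, Polynomial.eval_mul, Polynomial.eval_add,
    Polynomial.eval_X, Polynomial.eval_C, add_zero, one_mul] at h2
  simpa using h2

theorem hasDerivAt_F (hsB : ∀ x, HasDerivAt sB (wB x) x) (n : ℕ) (x : ℝ) :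
    HasDerivAt (Ff k sB Nφ n)
      ((wB x - ((x:ℂ)+k)) * Gf k sB Nφ x * (herm n).eval ((x:ℂ)+k)
        + Gf k sB Nφ x * (derivative (herm n)).eval ((x:ℂ)+k)) x :=
  (hasDerivAt_G hsB x).mul (hasDerivAt_hermpart k (herm n) x)

theorem continuous_sB (hsB : ∀ x, HasDerivAt sB (wB x) x) : Continuous sB :=
  continuous_iff_continuousAt.mpr fun x => (hsB x).continuousAt

theorem continuous_G (hsB : ∀ x, HasDerivAt sB (wB x) x) : Continuous (Gf k sB Nφ) := by
  apply continuous_const.mul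
  apply Complex.continuous_exp.comp
  apply (continuous_sB hsB).sub
  fun_prop

theorem continuous_hermpart (k : ℝ) (p : Polynomial ℂ) :
    Continuous (fun y : ℝ => p.eval ((y:ℂ)+k)) :=
  p.continuous.comp (Complex.continuous_ofReal.add continuous_const)

theorem continuous_F (hsB : ∀ x, HasDerivAt sB (wB x) x) (n : ℕ) :
    Continuous (Ff k sB Nφ n) :=
  (continuous_G hsB).mul (continuous_hermpart k (herm n))

theorem iterate_eq (hsB : ∀ x, HasDerivAt sB (wB x) x)
    (hnorm : ∀ x : ℝ, sA x + sB x = (x:ℂ)^2/2 + (k:ℂ)*x) (n : ℕ) :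
    (opB wB)^[n] (fun t => Nφ * Complex.exp (-sA t)) = Ff k sB Nφ n := by
  induction n with
  | zero =>
      funext x
      have hx : -sA x = sB x - ((x:ℂ)^2/2 + (k:ℂ)*x) := by linear_combination -(hnorm x)
      simp [Ff, Gf, herm_zero, hx]
  | succ n ih =>
      funext x
      rw [Function.iterate_succ_apply', ih]
      show -deriv (Ff k sB Nφ n) x + wB x * Ff k sB Nφ n x = Ff k sB Nφ (n+1) x
      rw [(hasDerivAt_F hsB n x).deriv]
      simp only [Ff, herm_succ n, eval_sub, eval_mul, eval_X]
      ring

theorem opA_F (hsum : ∀ x : ℝ, wA x + wB x = (x:ℂ) + (k:ℂ))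
    (hsB : ∀ x, HasDerivAt sB (wB x) x) (n : ℕ) (x : ℝ) :
    opA wA (Ff k sB Nφ n) x = Gf k sB Nφ x * (derivative (herm n)).eval ((x:ℂ)+k) := by
  show deriv (Ff k sB Nφ n) x + wA x * Ff k sB Nφ n x = _
  rw [(hasDerivAt_F hsB n x).deriv]
  simp only [Ff]
  linear_combination (Gf k sB Nφ x * (herm n).eval ((x:ℂ)+k)) * hsum x

theorem opA_F_zero (hsum : ∀ x : ℝ, wA x + wB x = (x:ℂ) + (k:ℂ))
    (hsB : ∀ x, HasDerivAt sB (wB x) x) (x : ℝ) :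
    opA wA (Ff k sB Nφ 0) x = 0 := by
  rw [opA_F hsum hsB 0 x, herm_zero]
  simp

theorem opA_F_succ (hsum : ∀ x : ℝ, wA x + wB x = (x:ℂ) + (k:ℂ))
    (hsB : ∀ x, HasDerivAt sB (wB x) x) (n : ℕ) (x : ℝ) :
    opA wA (Ff k sB Nφ (n+1)) x = ((n:ℂ)+1) * Ff k sB Nφ n x := by
  rw [opA_F hsum hsB (n+1) x, derivative_herm_succ n]
  simp only [eval_mul, eval_C, Ff]
  ring


theorem integral_bound (hsB : ∀ x, HasDerivAt sB (wB x) x)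
    (u : ℝ → ℂ) (hu : Continuous u) (husup : HasCompactSupport u) :
    ∃ Cst T : ℝ, 0 ≤ Cst ∧ 2 ≤ T ∧ ∀ n : ℕ,
      ‖∫ x : ℝ, (starRingEnd ℂ) (u x) * Ff k sB (Nφ := Nφ) n x‖
        ≤ Cst * (T^n * Real.sqrt n.factorial) := by
  classical
  set K := tsupport u with hK
  have hKc : IsCompact K := husup
  obtain ⟨M0, hM0⟩ := hKc.exists_bound_of_continuousOn
    ((hu.mul (continuous_G (Nφ := Nφ) hsB)).continuousOn)
  obtain ⟨T0, hT0⟩ := hKc.exists_bound_of_continuousOn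
    ((Complex.continuous_ofReal.add (continuous_const (y := (k:ℂ)))).continuousOn)
  set M := max M0 0
  set T := max T0 2
  refine ⟨M * (volume K).toReal, T, by positivity, le_max_right _ _, fun n => ?_⟩
  have hsub : ∀ x : ℝ, x ∉ K → (starRingEnd ℂ) (u x) * Ff k sB (Nφ := Nφ) n x = 0 := by
    intro x hx
    rw [image_eq_zero_of_notMem_tsupport hx]
    simp
  rw [← setIntegral_eq_integral_of_forall_compl_eq_zero hsub]
  have hmeas : AEStronglyMeasurable (fun x : ℝ => (starRingEnd ℂ) (u x) * Ff k sB (Nφ := Nφ) n x)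
      (volume.restrict K) :=
    (((Complex.continuous_conj.comp hu).mul (continuous_F hsB n))).aestronglyMeasurable.restrict
  have hb : ∀ x ∈ K, ‖(starRingEnd ℂ) (u x) * Ff k sB (Nφ := Nφ) n x‖
      ≤ M * (T^n * Real.sqrt n.factorial) := by
    intro x hx
    have h1 : ‖(starRingEnd ℂ) (u x) * Ff k sB (Nφ := Nφ) n x‖
        = ‖u x * Gf k sB Nφ x‖ * ‖(herm n).eval ((x:ℂ)+k)‖ := by
      simp only [Ff, norm_mul, Complex.norm_conj]
      ring
    rw [h1]
    have h2 : ‖(herm n).eval ((x:ℂ)+k)‖ ≤ T^n * Real.sqrt n.factorial := by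
      apply herm_bound (le_max_right T0 2)
      calc ‖(x:ℂ)+k‖ = ‖(x:ℂ)+(k:ℂ)‖ := rfl
        _ ≤ T0 := hT0 x hx
        _ ≤ T := le_max_left _ _
    have h3 : ‖u x * Gf k sB Nφ x‖ ≤ M := le_trans (hM0 x hx) (le_max_left _ _)
    exact mul_le_mul h3 h2 (norm_nonneg _) (le_max_right _ _)
  have hfin := norm_setIntegral_le_of_norm_le_const (μ := volume) hKc.measure_lt_top hb
  rw [show M * (volume K).toReal * (T^n * Real.sqrt n.factorial)
      = (M * (T^n * Real.sqrt n.factorial)) * (volume K).toReal by ring]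
  exact hfin


theorem master {k : ℝ} {wA wB sA sB : ℝ → ℂ} {Nφ : ℂ}
    (hwAc : Continuous wA) (hwBc : Continuous wB)
    (hsum : ∀ x : ℝ, wA x + wB x = (x : ℂ) + (k : ℂ))
    (hsB : ∀ x : ℝ, HasDerivAt sB (wB x) x)
    (hnorm : ∀ x : ℝ, sA x + sB x = (x : ℂ) ^ 2 / 2 + (k : ℂ) * (x : ℂ))
    (v : ℝ → ℂ) (hv : ContDiff ℝ (⊤ : ℕ∞) v) (hvsupp : HasCompactSupport v) (z : ℂ) :
    Summable (fun n : ℕ => ‖((z ^ n / (Real.sqrt n.factorial : ℂ)) *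
      ∫ x : ℝ, (starRingEnd ℂ) (opAdag wA v x) * pbPhi wB sA Nφ n x)‖) ∧
    Summable (fun n : ℕ => ‖((z ^ n / (Real.sqrt n.factorial : ℂ)) *
      ∫ x : ℝ, (starRingEnd ℂ) (v x) * pbPhi wB sA Nφ n x)‖) ∧
    (∑' n : ℕ, (z ^ n / (Real.sqrt n.factorial : ℂ)) *
        ∫ x : ℝ, (starRingEnd ℂ) (opAdag wA v x) * pbPhi wB sA Nφ n x)
      = z * ∑' n : ℕ, (z ^ n / (Real.sqrt n.factorial : ℂ)) *
          ∫ x : ℝ, (starRingEnd ℂ) (v x) * pbPhi wB sA Nφ n x := by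
  have hvc : Continuous v := hv.continuous
  have hdv : Continuous (deriv v) := hv.continuous_deriv (by simp)
  have hvd : ∀ x, HasDerivAt v (deriv v x) x :=
    fun x => (hv.differentiable (by simp) x).hasDerivAt
  have hAv_c : Continuous (opAdag wA v) :=
    (hdv.neg).add ((Complex.continuous_conj.comp hwAc).mul hvc)
  have hAv_supp : HasCompactSupport (opAdag wA v) := by
    have h1 : HasCompactSupport fun x : ℝ => -deriv v x :=
      hvsupp.deriv.comp_left (g := Neg.neg) neg_zero
    have h2 : HasCompactSupport fun x : ℝ => (starRingEnd ℂ) (wA x) * v x :=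
      hvsupp.mul_left
    exact h1.comp₂_left h2 (add_zero 0)
  have hsqpos : ∀ m : ℕ, (0:ℝ) < Real.sqrt m.factorial :=
    fun m => Real.sqrt_pos.mpr (by exact_mod_cast Nat.factorial_pos m)
  have hsqC : ∀ m : ℕ, ((Real.sqrt m.factorial : ℝ) : ℂ) ≠ 0 :=
    fun m => Complex.ofReal_ne_zero.mpr (hsqpos m).ne'
  have hsq : ∀ m : ℕ, ((Real.sqrt m.factorial : ℝ) : ℂ) * ((Real.sqrt m.factorial : ℝ) : ℂ)
      = (m.factorial : ℂ) := by
    intro m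
    rw [← Complex.ofReal_mul, Real.mul_self_sqrt (by positivity)]
    norm_cast
  have hintu : ∀ (u : ℝ → ℂ) (n : ℕ),
      (∫ x : ℝ, (starRingEnd ℂ) (u x) * pbPhi wB sA Nφ n x)
        = (1 / (Real.sqrt n.factorial : ℂ)) *
            ∫ x : ℝ, (starRingEnd ℂ) (u x) * Ff k sB Nφ n x := by
    intro u n
    rw [show (fun x : ℝ => (starRingEnd ℂ) (u x) * pbPhi wB sA Nφ n x)
        = fun x : ℝ => (1 / (Real.sqrt n.factorial : ℂ)) *
            ((starRingEnd ℂ) (u x) * Ff k sB Nφ n x) from funext fun x => by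
      simp only [pbPhi, iterate_eq (Nφ := Nφ) hsB hnorm n]; ring]
    exact MeasureTheory.integral_const_mul _ _
  have gen : ∀ (u : ℝ → ℂ), Continuous u → HasCompactSupport u →
      Summable (fun n : ℕ => ‖((z ^ n / (Real.sqrt n.factorial : ℂ)) *
        ∫ x : ℝ, (starRingEnd ℂ) (u x) * pbPhi wB sA Nφ n x)‖) := by
    intro u hu husup
    obtain ⟨Cst, T, hCst, hT, hbd⟩ := integral_bound (Nφ := Nφ) hsB u hu husup
    apply Summable.of_nonneg_of_le (fun n => norm_nonneg _) ?_
      ((summable_pow_div_sqrt_factorial (‖z‖ * T)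
        (by positivity)).mul_left Cst)
    intro n
    rw [hintu u n]
    set s := Real.sqrt n.factorial with hs
    set J := ∫ x : ℝ, (starRingEnd ℂ) (u x) * Ff k sB Nφ n x with hJ
    have e : ‖(z ^ n / (s : ℂ)) * ((1 / (s : ℂ)) * J)‖
        = ‖z‖ ^ n / s * ((1 / s) * ‖J‖) := by
      rw [norm_mul, norm_mul, norm_div, norm_div, norm_pow, norm_one]
      rw [Complex.norm_of_nonneg (hsqpos n).le]
    rw [e]
    have hb2 : ‖J‖ ≤ Cst * (T ^ n * s) := by
      exact hbd n
    have step : ‖z‖ ^ n / s * ((1 / s) * ‖J‖)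
        ≤ ‖z‖ ^ n / s * ((1 / s) * (Cst * (T ^ n * s))) := by
      gcongr
    refine step.trans (le_of_eq ?_)
    have hs0 : s ≠ 0 := (hsqpos n).ne'
    rw [mul_pow]
    field_simp
  refine ⟨gen (opAdag wA v) hAv_c hAv_supp, gen v hvc hvsupp, ?_⟩
  -- integration by parts
  have IBP : ∀ n : ℕ, (∫ x : ℝ, (starRingEnd ℂ) (opAdag wA v x) * Ff k sB Nφ n x)
      = ∫ x : ℝ, (starRingEnd ℂ) (v x) * opA wA (Ff k sB Nφ n) x := by
    intro n
    have hF : ∀ x, HasDerivAt (Ff k sB Nφ n)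
        ((wB x - ((x:ℂ)+k)) * Gf k sB Nφ x * (herm n).eval ((x:ℂ)+k)
          + Gf k sB Nφ x * (derivative (herm n)).eval ((x:ℂ)+k)) x :=
      hasDerivAt_F hsB n
    set F := Ff k sB Nφ n with hFdef
    set F' := fun x : ℝ => (wB x - ((x:ℂ)+k)) * Gf k sB Nφ x * (herm n).eval ((x:ℂ)+k)
        + Gf k sB Nφ x * (derivative (herm n)).eval ((x:ℂ)+k) with hF'def
    have hFc : Continuous F := continuous_F hsB n
    have hF'c : Continuous F' := by
      apply Continuous.add
      · exact ((hwBc.sub (Complex.continuous_ofReal.add continuous_const)).mul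
          (continuous_G hsB)).mul (continuous_hermpart k _)
      · exact (continuous_G hsB).mul (continuous_hermpart k _)
    set cv := fun x : ℝ => (starRingEnd ℂ) (v x) with hcvdef
    set cv' := fun x : ℝ => (starRingEnd ℂ) (deriv v x) with hcv'def
    have hcvc : Continuous cv := Complex.continuous_conj.comp hvc
    have hcv'c : Continuous cv' := Complex.continuous_conj.comp hdv
    have hcvsupp : HasCompactSupport cv := hvsupp.comp_left (map_zero _)
    have hcv'supp : HasCompactSupport cv' := hvsupp.deriv.comp_left (map_zero _)
    have hcvd : ∀ x, HasDerivAt cv (cv' x) x := fun x => (hvd x).star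
    have int1 : Integrable (cv * F') :=
      (hcvc.mul hF'c).integrable_of_hasCompactSupport hcvsupp.mul_right
    have int2 : Integrable (cv' * F) :=
      (hcv'c.mul hFc).integrable_of_hasCompactSupport hcv'supp.mul_right
    have int3 : Integrable (cv * F) :=
      (hcvc.mul hFc).integrable_of_hasCompactSupport hcvsupp.mul_right
    have key := MeasureTheory.integral_mul_deriv_eq_deriv_mul_of_integrable
      (fun x _ => hcvd x) (fun x _ => hF x) int1 int2 int3
    have int1' : Integrable fun x : ℝ => cv x * F' x := int1
    have int2' : Integrable fun x : ℝ => cv' x * F x := int2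
    have intW : Integrable fun x : ℝ => (wA x * cv x) * F x :=
      ((hwAc.mul hcvc).mul hFc).integrable_of_hasCompactSupport
        (hcvsupp.mul_left.mul_right)
    have eL : (fun x : ℝ => (starRingEnd ℂ) (opAdag wA v x) * F x)
        = fun x : ℝ => (wA x * cv x) * F x - cv' x * F x := by
      funext x
      simp only [opAdag, map_add, map_neg, map_mul, Complex.conj_conj, hcvdef, hcv'def]
      ring
    have eR : (fun x : ℝ => (starRingEnd ℂ) (v x) * opA wA F x)
        = fun x : ℝ => cv x * F' x + (wA x * cv x) * F x := by
      funext x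
      have hd : deriv F x = F' x := (hF x).deriv
      simp only [opA, hd, hcvdef]
      ring
    rw [eL, eR, MeasureTheory.integral_sub intW int2',
      MeasureTheory.integral_add int1' intW, key]
    ring
  -- the recursion and reindexing
  set a := fun n : ℕ => (z ^ n / (Real.sqrt n.factorial : ℂ)) *
      ∫ x : ℝ, (starRingEnd ℂ) (opAdag wA v x) * pbPhi wB sA Nφ n x with hadef
  set b := fun n : ℕ => (z ^ n / (Real.sqrt n.factorial : ℂ)) *
      ∫ x : ℝ, (starRingEnd ℂ) (v x) * pbPhi wB sA Nφ n x with hbdef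
  have hsa : Summable a := Summable.of_norm (gen (opAdag wA v) hAv_c hAv_supp)
  have ha0 : a 0 = 0 := by
    have h1 : (∫ x : ℝ, (starRingEnd ℂ) (v x) * opA wA (Ff k sB Nφ 0) x) = 0 := by
      rw [show (fun x : ℝ => (starRingEnd ℂ) (v x) * opA wA (Ff k sB Nφ 0) x)
          = fun _ : ℝ => (0:ℂ) from funext fun x => by
        rw [opA_F_zero hsum hsB x, mul_zero]]
      exact MeasureTheory.integral_zero _ _
    simp only [hadef, hintu (opAdag wA v) 0, IBP 0, h1, mul_zero]
  have hstep : ∀ n : ℕ, a (n+1) = z * b n := by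
    intro n
    have e1 : (∫ x : ℝ, (starRingEnd ℂ) (v x) * opA wA (Ff k sB Nφ (n+1)) x)
        = ((n:ℂ)+1) * ∫ x : ℝ, (starRingEnd ℂ) (v x) * Ff k sB Nφ n x := by
      rw [show (fun x : ℝ => (starRingEnd ℂ) (v x) * opA wA (Ff k sB Nφ (n+1)) x)
          = fun x : ℝ => ((n:ℂ)+1) * ((starRingEnd ℂ) (v x) * Ff k sB Nφ n x) from
        funext fun x => by rw [opA_F_succ hsum hsB n x]; ring]
      exact MeasureTheory.integral_const_mul _ _
    simp only [hadef, hbdef, hintu (opAdag wA v) (n+1), hintu v n, IBP (n+1), e1]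
    set J := ∫ x : ℝ, (starRingEnd ℂ) (v x) * Ff k sB Nφ n x with hJdef
    have hfc : ((n+1).factorial : ℂ) = ((n:ℂ)+1) * (n.factorial : ℂ) := by
      rw [Nat.factorial_succ]; push_cast; ring
    have hne1 : ((n.factorial : ℕ) : ℂ) ≠ 0 := by
      exact_mod_cast (Nat.factorial_pos n).ne'
    have hne2 : ((n:ℂ)+1) ≠ 0 := Nat.cast_add_one_ne_zero n
    calc z ^ (n+1) / (Real.sqrt (n+1).factorial : ℂ) *
          ((1 / (Real.sqrt (n+1).factorial : ℂ)) * (((n:ℂ)+1) * J))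
        = z ^ (n+1) * ((n:ℂ)+1) * J *
            (1 / ((Real.sqrt (n+1).factorial : ℂ) * (Real.sqrt (n+1).factorial : ℂ))) := by
          ring
      _ = z ^ (n+1) * ((n:ℂ)+1) * J * (1 / ((n+1).factorial : ℂ)) := by rw [hsq (n+1)]
      _ = z * (z ^ n * J * (1 / (n.factorial : ℂ))) := by
          rw [hfc]
          field_simp
          ring
      _ = z * (z ^ n * J *
            (1 / ((Real.sqrt n.factorial : ℂ) * (Real.sqrt n.factorial : ℂ)))) := by
          rw [hsq n]
      _ = z * (z ^ n / (Real.sqrt n.factorial : ℂ) * ((1 / (Real.sqrt n.factorial : ℂ)) * J)) := by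
          ring
  calc (∑' n : ℕ, a n) = a 0 + ∑' n : ℕ, a (n+1) := Summable.tsum_eq_zero_add hsa
    _ = ∑' n : ℕ, z * b n := by
        rw [ha0, zero_add]
        exact tsum_congr hstep
    _ = z * ∑' n : ℕ, b n := tsum_mul_left

end PB


theorem stmt19 (k : ℝ) (wA wB sA sB : ℝ → ℂ) (Nφ NΨ : ℂ)
    (hwA : ContDiff ℝ (⊤ : ℕ∞) wA) (hwB : ContDiff ℝ (⊤ : ℕ∞) wB)
    (hsum : ∀ x : ℝ, wA x + wB x = (x : ℂ) + (k : ℂ))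
    (hsA : ∀ x : ℝ, HasDerivAt sA (wA x) x)
    (hsB : ∀ x : ℝ, HasDerivAt sB (wB x) x)
    (hnorm : ∀ x : ℝ, sA x + sB x = (x : ℂ) ^ 2 / 2 + (k : ℂ) * (x : ℂ))
    (hNφ : Nφ ≠ 0) (hNΨ : NΨ ≠ 0)
    (v : ℝ → ℂ) (hv : ContDiff ℝ (⊤ : ℕ∞) v) (hvsupp : HasCompactSupport v)
    (z : ℂ) :
    -- absolute convergence of all four series:
    Summable (fun n : ℕ => ‖((z ^ n / (Real.sqrt n.factorial : ℂ)) *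
      ∫ x : ℝ, (starRingEnd ℂ) (opAdag wA v x) * pbPhi wB sA Nφ n x)‖) ∧
    Summable (fun n : ℕ => ‖((z ^ n / (Real.sqrt n.factorial : ℂ)) *
      ∫ x : ℝ, (starRingEnd ℂ) (v x) * pbPhi wB sA Nφ n x)‖) ∧
    Summable (fun n : ℕ => ‖((z ^ n / (Real.sqrt n.factorial : ℂ)) *
      ∫ x : ℝ, (starRingEnd ℂ) (opB wB v x) * pbPsi wA sB NΨ n x)‖) ∧
    Summable (fun n : ℕ => ‖((z ^ n / (Real.sqrt n.factorial : ℂ)) *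
      ∫ x : ℝ, (starRingEnd ℂ) (v x) * pbPsi wA sB NΨ n x)‖) ∧
    -- the weak eigenvalue equation for φ(z):
    (∑' n : ℕ, (z ^ n / (Real.sqrt n.factorial : ℂ)) *
        ∫ x : ℝ, (starRingEnd ℂ) (opAdag wA v x) * pbPhi wB sA Nφ n x)
      = z * ∑' n : ℕ, (z ^ n / (Real.sqrt n.factorial : ℂ)) *
          ∫ x : ℝ, (starRingEnd ℂ) (v x) * pbPhi wB sA Nφ n x ∧
    -- the weak eigenvalue equation for Ψ(z):
    (∑' n : ℕ, (z ^ n / (Real.sqrt n.factorial : ℂ)) *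
        ∫ x : ℝ, (starRingEnd ℂ) (opB wB v x) * pbPsi wA sB NΨ n x)
      = z * ∑' n : ℕ, (z ^ n / (Real.sqrt n.factorial : ℂ)) *
          ∫ x : ℝ, (starRingEnd ℂ) (v x) * pbPsi wA sB NΨ n x := by
  obtain ⟨S1, S2, E1⟩ := PB.master (Nφ := Nφ) hwA.continuous hwB.continuous hsum hsB hnorm v hv hvsupp z
  have hsum2 : ∀ x : ℝ, (starRingEnd ℂ) (wB x) + (starRingEnd ℂ) (wA x)
      = (x : ℂ) + (k : ℂ) := by
    intro x
    calc (starRingEnd ℂ) (wB x) + (starRingEnd ℂ) (wA x)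
        = (starRingEnd ℂ) (wA x + wB x) := by rw [map_add]; ring
      _ = (starRingEnd ℂ) ((x:ℂ) + (k:ℂ)) := by rw [hsum x]
      _ = (x:ℂ) + (k:ℂ) := by simp [Complex.conj_ofReal]
  have hsB2 : ∀ x : ℝ, HasDerivAt (fun t => (starRingEnd ℂ) (sA t))
      ((starRingEnd ℂ) (wA x)) x := fun x => (hsA x).star
  have hnorm2 : ∀ x : ℝ, (starRingEnd ℂ) (sB x) + (starRingEnd ℂ) (sA x)
      = (x : ℂ) ^ 2 / 2 + (k : ℂ) * (x : ℂ) := by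
    intro x
    calc (starRingEnd ℂ) (sB x) + (starRingEnd ℂ) (sA x)
        = (starRingEnd ℂ) (sA x + sB x) := by rw [map_add]; ring
      _ = (starRingEnd ℂ) ((x:ℂ)^2/2 + (k:ℂ)*(x:ℂ)) := by rw [hnorm x]
      _ = (x:ℂ)^2/2 + (k:ℂ)*(x:ℂ) := by
          simp [map_add, map_mul, map_pow, map_div₀, map_ofNat, Complex.conj_ofReal]
  obtain ⟨A1, A2, A3⟩ := PB.master
    (wA := fun x => (starRingEnd ℂ) (wB x)) (wB := fun x => (starRingEnd ℂ) (wA x))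
    (sA := fun t => (starRingEnd ℂ) (sB t)) (sB := fun t => (starRingEnd ℂ) (sA t))
    (Nφ := NΨ)
    (Complex.continuous_conj.comp hwB.continuous)
    (Complex.continuous_conj.comp hwA.continuous)
    hsum2 hsB2 hnorm2 v hv hvsupp z
  have hpb : pbPhi (fun x => (starRingEnd ℂ) (wA x)) (fun t => (starRingEnd ℂ) (sB t)) NΨ
      = pbPsi wA sB NΨ := rfl
  have hop : opAdag (fun x => (starRingEnd ℂ) (wB x)) v = opB wB v := by
    funext x
    simp [opAdag, opB, Complex.conj_conj]
  rw [hpb] at A1 A2 A3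
  rw [hop] at A1 A3
  exact ⟨S1, S2, A1, A2, E1, A3⟩

end
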